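/- arXiv:2011.10790 — 6 statements merged into one kernel-verified Lean document; each statement's English description precedes it below -/
import Mathlib

section
/- The function τ ↦ log(τ · cot τ) is strictly decreasing and concave on the interval (0, π/2). -/
/-! With `f τ = log (τ cos τ / sin τ)` one has `f' τ = 1/τ - 1/(sin τ cos τ)`, which is negative
because `sin τ cos τ = sin (2τ) / 2 < τ`. The second derivative is
`f'' τ = (cos² τ - sin² τ) / (sin τ cos τ)² - 1/τ²`, and its sign reduces to
`τ² (cos² τ - sin² τ) < sin² τ cos² τ`. This follows from `τ cos τ < sin τ` (that is, `τ < tan τ`)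
together with `cos² τ - sin² τ = 2 cos² τ - 1 ≤ cos⁴ τ`. -/

open Real Set

namespace Real

lemma sin_mul_cos_pos {x : ℝ} (h0 : 0 < x) (h1 : x < π / 2) : 0 < sin x * cos x :=
  mul_pos (sin_pos_of_pos_of_lt_pi h0 (h1.trans (half_lt_self pi_pos)))
    (cos_pos_of_mem_Ioo ⟨by linarith [pi_pos], h1⟩)

lemma sin_mul_cos_lt_self {x : ℝ} (hx : 0 < x) : sin x * cos x < x := by
  have h := sin_lt (mul_pos two_pos hx)
  rw [sin_two_mul] at h
  linarith

lemma mul_cos_lt_sin {x : ℝ} (h0 : 0 < x) (h1 : x < π / 2) : x * cos x < sin x := by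
  have hc : 0 < cos x := cos_pos_of_mem_Ioo ⟨by linarith [pi_pos], h1⟩
  have h := lt_tan h0 h1
  rwa [tan_eq_sin_div_cos, lt_div_iff₀ hc] at h

lemma sq_mul_cos_sq_sub_sin_sq_lt {x : ℝ} (h0 : 0 < x) (h1 : x < π / 2) :
    x ^ 2 * (cos x ^ 2 - sin x ^ 2) < (sin x * cos x) ^ 2 := by
  have hc : 0 < cos x := cos_pos_of_mem_Ioo ⟨by linarith [pi_pos], h1⟩
  have hsq : (x * cos x) ^ 2 < sin x ^ 2 :=
    pow_lt_pow_left₀ (mul_cos_lt_sin h0 h1) (by positivity) two_ne_zero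
  calc x ^ 2 * (cos x ^ 2 - sin x ^ 2) ≤ (x * cos x) ^ 2 * cos x ^ 2 := by
        nlinarith [mul_nonneg (sq_nonneg x) (sq_nonneg (cos x ^ 2 - 1)), sin_sq_add_cos_sq x]
    _ < sin x ^ 2 * cos x ^ 2 := by gcongr
    _ = (sin x * cos x) ^ 2 := by ring

lemma hasDerivAt_log_mul_cos_div_sin {τ : ℝ} (hτ : τ ≠ 0) (hsc : sin τ * cos τ ≠ 0) :
    HasDerivAt (fun τ => log (τ * cos τ / sin τ)) (1 / τ - 1 / (sin τ * cos τ)) τ := by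
  obtain ⟨hs, hc⟩ := mul_ne_zero_iff.1 hsc
  have h := (((hasDerivAt_id' τ).fun_mul (hasDerivAt_cos τ)).fun_div (hasDerivAt_sin τ) hs).log
    (by simp [hτ, hs, hc])
  convert h using 1
  field_simp
  linear_combination τ * sin_sq_add_cos_sq τ

lemma hasDerivAt_one_div_sub_one_div_sin_mul_cos {τ : ℝ} (hτ : τ ≠ 0)
    (hsc : sin τ * cos τ ≠ 0) :
    HasDerivAt (fun τ => 1 / τ - 1 / (sin τ * cos τ))
      ((cos τ ^ 2 - sin τ ^ 2) / (sin τ * cos τ) ^ 2 - 1 / τ ^ 2) τ := by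
  have h := ((hasDerivAt_const τ 1).fun_div (hasDerivAt_id' τ) hτ).fun_sub
    ((hasDerivAt_const τ 1).fun_div ((hasDerivAt_sin τ).fun_mul (hasDerivAt_cos τ)) hsc)
  exact h.congr_deriv (by ring)

lemma one_div_sub_one_div_sin_mul_cos_neg {x : ℝ} (hx : 0 < x) (hsc : 0 < sin x * cos x) :
    1 / x - 1 / (sin x * cos x) < 0 :=
  sub_neg.2 (one_div_lt_one_div_of_lt hsc (sin_mul_cos_lt_self hx))

lemma cos_sq_sub_sin_sq_div_sub_one_div_sq_neg {x : ℝ} (h0 : 0 < x) (h1 : x < π / 2) :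
    (cos x ^ 2 - sin x ^ 2) / (sin x * cos x) ^ 2 - 1 / x ^ 2 < 0 := by
  have hsc := sin_mul_cos_pos h0 h1
  rw [sub_neg, div_lt_div_iff₀ (by positivity) (by positivity)]
  linarith [sq_mul_cos_sq_sub_sin_sq_lt h0 h1]

end Real

theorem log_tau_cot_strictAnti_concave :
    StrictAntiOn (fun τ : ℝ => Real.log (τ * Real.cos τ / Real.sin τ)) (Set.Ioo 0 (π / 2)) ∧
    ConcaveOn ℝ (Set.Ioo 0 (π / 2)) (fun τ : ℝ => Real.log (τ * Real.cos τ / Real.sin τ)) := by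
  have hf' {τ : ℝ} (hτ : τ ∈ Ioo 0 (π / 2)) :=
    hasDerivAt_log_mul_cos_div_sin hτ.1.ne' (sin_mul_cos_pos hτ.1 hτ.2).ne'
  have hf'' {τ : ℝ} (hτ : τ ∈ Ioo 0 (π / 2)) :=
    hasDerivAt_one_div_sub_one_div_sin_mul_cos hτ.1.ne' (sin_mul_cos_pos hτ.1 hτ.2).ne'
  have hcont : ContinuousOn (fun τ : ℝ => log (τ * cos τ / sin τ)) (Ioo 0 (π / 2)) :=
    fun τ hτ => (hf' hτ).continuousAt.continuousWithinAt
  have hD : interior (Ioo (0 : ℝ) (π / 2)) = Ioo 0 (π / 2) := interior_Ioo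
  refine ⟨strictAntiOn_of_hasDerivWithinAt_neg (convex_Ioo _ _) hcont
      (fun τ hτ => (hf' (hD ▸ hτ)).hasDerivWithinAt) fun τ hτ => ?_,
    concaveOn_of_hasDerivWithinAt2_nonpos (convex_Ioo _ _) hcont
      (fun τ hτ => (hf' (hD ▸ hτ)).hasDerivWithinAt) (fun τ hτ => (hf'' (hD ▸ hτ)).hasDerivWithinAt)
      fun τ hτ => ?_⟩ <;> rw [hD] at hτ
  · exact one_div_sub_one_div_sin_mul_cos_neg hτ.1 (sin_mul_cos_pos hτ.1 hτ.2)
  · exact (cos_sq_sub_sin_sq_div_sub_one_div_sq_neg hτ.1 hτ.2).le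
end

section
/- If Θ: (0,∞) → (0,∞) is differentiable, r ↦ Θ(e^r) is convex and increasing, Θ(x) → 0 as x → 0+, then Θ₁(x) = xΘ'(x) + Θ(x) tends to 0 as x → 0+. -/
/-!
Write `g r = Θ (exp r)`, so that `t * Θ' t = g' (log t)`. Monotonicity of `g` gives `g' ≥ 0`, and
convexity bounds the derivative by the forward slope over a unit step, `g' r ≤ g (r + 1) - g r`.
Hence `Θ t ≤ t Θ' t + Θ t ≤ Θ (e t)`, and both bounds tend to `0` as `t → 0+`.
-/

open Real Set Filter Topology

lemma ConvexOn.deriv_le_sub_of_hasDerivAt {g : ℝ → ℝ} {g' r : ℝ} (hconv : ConvexOn ℝ univ g)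
    (hg : HasDerivAt g g' r) : g' ≤ g (r + 1) - g r := by
  simpa [slope_def_field] using
    hconv.le_slope_of_hasDerivAt (mem_univ r) (mem_univ (r + 1)) (lt_add_one r) hg

lemma hasDerivAt_comp_exp_log {Θ : ℝ → ℝ} {t : ℝ} (ht : 0 < t) (hΘ : DifferentiableAt ℝ Θ t) :
    HasDerivAt (fun r => Θ (exp r)) (t * deriv Θ t) (log t) := by
  have hΘ' : HasDerivAt Θ (deriv Θ t) (exp (log t)) := by
    rw [exp_log ht]; exact hΘ.hasDerivAt
  have := hΘ'.comp (log t) (hasDerivAt_exp (log t))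
  rwa [exp_log ht, mul_comm] at this

lemma Filter.Tendsto.comp_const_mul_nhdsGT_zero {f : ℝ → ℝ} {l : Filter ℝ} {c : ℝ} (hc : 0 < c)
    (hf : Tendsto f (𝓝[>] 0) l) : Tendsto (fun t => f (c * t)) (𝓝[>] 0) l := by
  refine hf.comp (tendsto_nhdsWithin_of_tendsto_nhds_of_eventually_within _ ?_ ?_)
  · simpa using ((continuous_const_mul c).tendsto 0).mono_left nhdsWithin_le_nhds
  · filter_upwards [self_mem_nhdsWithin] with t ht using mul_pos hc ht

theorem theta1_tendsto_zero_general
    (Θ : ℝ → ℝ)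
    (hdiff : DifferentiableOn ℝ Θ (Set.Ioi 0))
    (hmono : Monotone (fun r : ℝ => Θ (Real.exp r)))
    (hconv : ConvexOn ℝ Set.univ (fun r : ℝ => Θ (Real.exp r)))
    (hzero : Filter.Tendsto Θ (nhdsWithin 0 (Set.Ioi 0)) (nhds 0)) :
    Filter.Tendsto (fun x : ℝ => x * deriv Θ x + Θ x)
      (nhdsWithin 0 (Set.Ioi 0)) (nhds 0) := by
  have hderiv : ∀ t ∈ Ioi (0 : ℝ),
      HasDerivAt (fun r => Θ (exp r)) (t * deriv Θ t) (log t) := fun t ht =>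
    hasDerivAt_comp_exp_log ht ((hdiff t ht).differentiableAt (isOpen_Ioi.mem_nhds ht))
  refine tendsto_of_tendsto_of_tendsto_of_le_of_le' hzero
    (hzero.comp_const_mul_nhdsGT_zero (exp_pos 1)) ?_ ?_
  · filter_upwards [self_mem_nhdsWithin] with t ht
    have := (hderiv t ht).deriv ▸ hmono.deriv_nonneg (x := log t)
    linarith
  · filter_upwards [self_mem_nhdsWithin] with t ht
    have := hconv.deriv_le_sub_of_hasDerivAt (hderiv t ht)
    rw [exp_add, exp_log ht, mul_comm t (exp 1)] at this
    linarith

theorem theta1_tendsto_zero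
    (Θ : ℝ → ℝ)
    (hdiff : DifferentiableOn ℝ Θ (Set.Ioi 0))
    (hpos : ∀ x ∈ Set.Ioi (0 : ℝ), 0 < Θ x)
    (hmono : Monotone (fun r : ℝ => Θ (Real.exp r)))
    (hconv : ConvexOn ℝ Set.univ (fun r : ℝ => Θ (Real.exp r)))
    (hzero : Filter.Tendsto Θ (nhdsWithin 0 (Set.Ioi 0)) (nhds 0)) :
    Filter.Tendsto (fun x : ℝ => x * deriv Θ x + Θ x)
      (nhdsWithin 0 (Set.Ioi 0)) (nhds 0) :=
  theta1_tendsto_zero_general Θ hdiff hmono hconv hzero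
end

section
/- If Φ₁ and Φ₂ are admissible (C⁴ convex functions with Φᵢ'' > 0 and −1/Φᵢ'' convex), then Φ₁ + Φ₂ and λΦ₁ for λ > 0 are admissible. -/
open Real Set

/-- A C⁴ function `Φ` on `(0,∞)` with `Φ'' > 0` is admissible if `-1/Φ''` is convex. -/
def Admissible (Φ : ℝ → ℝ) : Prop :=
  ContDiffOn ℝ 4 Φ (Set.Ioi 0) ∧
  (∀ x ∈ Set.Ioi (0 : ℝ), 0 < deriv (deriv Φ) x) ∧
  ConvexOn ℝ (Set.Ioi 0) (fun x => -1 / deriv (deriv Φ) x)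

private lemma pos_comb {t s a b : ℝ} (ht : 0 ≤ t) (hs : 0 ≤ s) (hts : t + s = 1)
    (ha : 0 < a) (hb : 0 < b) : 0 < t * a + s * b := by
  rcases ht.eq_or_lt with h | h
  · have h1 : s = 1 := by linarith
    rw [← h, h1]; simpa using hb
  · nlinarith [mul_nonneg hs hb.le, mul_pos h ha]

private lemma harm_step (a1 a2 b1 b2 t s : ℝ) (ha1 : 0 < a1) (ha2 : 0 < a2)
    (hb1 : 0 < b1) (hb2 : 0 < b2) (ht : 0 ≤ t) (hs : 0 ≤ s) (hts : t + s = 1) :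
    a1 * a2 / (t * a2 + s * a1) + b1 * b2 / (t * b2 + s * b1) ≤
      (a1 + b1) * (a2 + b2) / ((t * a2 + s * a1) + (t * b2 + s * b1)) := by
  have hP : 0 < t * a2 + s * a1 := pos_comb ht hs hts ha2 ha1
  have hQ : 0 < t * b2 + s * b1 := pos_comb ht hs hts hb2 hb1
  rw [div_add_div _ _ hP.ne' hQ.ne', div_le_div_iff₀ (by positivity) (by positivity)]
  nlinarith [mul_nonneg (mul_nonneg ht hs) (sq_nonneg (a1 * b2 - a2 * b1))]

private lemma key_ineq (a1 a2 b1 b2 A B t s : ℝ) (ha1 : 0 < a1) (ha2 : 0 < a2)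
    (hb1 : 0 < b1) (hb2 : 0 < b2) (hA : 0 < A) (hB : 0 < B)
    (ht : 0 ≤ t) (hs : 0 ≤ s) (hts : t + s = 1)
    (h1 : -1 / A ≤ t * (-1 / a1) + s * (-1 / a2))
    (h2 : -1 / B ≤ t * (-1 / b1) + s * (-1 / b2)) :
    -1 / (A + B) ≤ t * (-1 / (a1 + b1)) + s * (-1 / (a2 + b2)) := by
  have hP : 0 < t * a2 + s * a1 := pos_comb ht hs hts ha2 ha1
  have hQ : 0 < t * b2 + s * b1 := pos_comb ht hs hts hb2 hb1
  -- from h1 : A ≤ a1*a2/P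
  have hA1 : A ≤ a1 * a2 / (t * a2 + s * a1) := by
    rw [le_div_iff₀ hP]
    have h1' : (t * a2 + s * a1) / (a1 * a2) ≤ 1 / A := by
      have : t * (-1 / a1) + s * (-1 / a2) = -((t * a2 + s * a1) / (a1 * a2)) := by
        field_simp; ring
      rw [this] at h1
      linarith [neg_le_neg h1, (neg_div A 1).symm]
    have := (div_le_div_iff₀ (by positivity) hA).mp h1'
    nlinarith
  have hB1 : B ≤ b1 * b2 / (t * b2 + s * b1) := by
    rw [le_div_iff₀ hQ]
    have h2' : (t * b2 + s * b1) / (b1 * b2) ≤ 1 / B := by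
      have : t * (-1 / b1) + s * (-1 / b2) = -((t * b2 + s * b1) / (b1 * b2)) := by
        field_simp; ring
      rw [this] at h2
      linarith [neg_le_neg h2, (neg_div B 1).symm]
    have := (div_le_div_iff₀ (by positivity) hB).mp h2'
    nlinarith
  have hsum : A + B ≤ (a1 + b1) * (a2 + b2) / ((t * a2 + s * a1) + (t * b2 + s * b1)) :=
    le_trans (add_le_add hA1 hB1) (harm_step a1 a2 b1 b2 t s ha1 ha2 hb1 hb2 ht hs hts)
  have hS : 0 < (a1 + b1) * (a2 + b2) / ((t * a2 + s * a1) + (t * b2 + s * b1)) := by positivity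
  have h3 : 1 / ((a1 + b1) * (a2 + b2) / ((t * a2 + s * a1) + (t * b2 + s * b1))) ≤ 1 / (A + B) :=
    one_div_le_one_div_of_le (by positivity) hsum
  have h4 : -1 / (A + B) ≤ -1 / ((a1 + b1) * (a2 + b2) / ((t * a2 + s * a1) + (t * b2 + s * b1))) := by
    rw [neg_div, neg_div]
    linarith
  refine h4.trans (le_of_eq ?_)
  have hab1 : (0:ℝ) < a1 + b1 := by linarith
  have hab2 : (0:ℝ) < a2 + b2 := by linarith
  have hPQ : (0:ℝ) < t * a2 + s * a1 + (t * b2 + s * b1) := by linarith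
  field_simp
  ring

private lemma deriv2_add (Φ₁ Φ₂ : ℝ → ℝ) (h₁ : ContDiffOn ℝ 4 Φ₁ (Set.Ioi 0))
    (h₂ : ContDiffOn ℝ 4 Φ₂ (Set.Ioi 0)) {x : ℝ} (hx : x ∈ Set.Ioi (0 : ℝ)) :
    deriv (deriv (fun y => Φ₁ y + Φ₂ y)) x = deriv (deriv Φ₁) x + deriv (deriv Φ₂) x := by
  have hd1 : ContDiffOn ℝ 3 (deriv Φ₁) (Set.Ioi 0) := by
    have := h₁.deriv_of_isOpen (m := 3) isOpen_Ioi (by norm_num)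
    norm_num at this
    exact this
  have hd2 : ContDiffOn ℝ 3 (deriv Φ₂) (Set.Ioi 0) := by
    have := h₂.deriv_of_isOpen (m := 3) isOpen_Ioi (by norm_num)
    norm_num at this
    exact this
  have hev : deriv (fun y => Φ₁ y + Φ₂ y) =ᶠ[nhds x] fun y => deriv Φ₁ y + deriv Φ₂ y := by
    filter_upwards [isOpen_Ioi.mem_nhds hx] with y hy
    exact deriv_add ((h₁.contDiffAt (isOpen_Ioi.mem_nhds hy)).differentiableAt (by norm_num))
      ((h₂.contDiffAt (isOpen_Ioi.mem_nhds hy)).differentiableAt (by norm_num))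
  rw [hev.deriv_eq]
  exact deriv_add ((hd1.contDiffAt (isOpen_Ioi.mem_nhds hx)).differentiableAt (by norm_num))
    ((hd2.contDiffAt (isOpen_Ioi.mem_nhds hx)).differentiableAt (by norm_num))

private lemma deriv2_smul (Φ : ℝ → ℝ) (lam : ℝ) (x : ℝ) :
    deriv (deriv (fun y => lam * Φ y)) x = lam * deriv (deriv Φ) x := by
  have h : deriv (fun y => lam * Φ y) = fun y => lam * deriv Φ y := by
    funext y; exact deriv_const_mul_field lam
  rw [h]
  exact deriv_const_mul_field lam

theorem admissible_add_smul (Φ₁ Φ₂ : ℝ → ℝ) (h₁ : Admissible Φ₁) (h₂ : Admissible Φ₂)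
    (lam : ℝ) (hlam : 0 < lam) :
    Admissible (fun x => Φ₁ x + Φ₂ x) ∧ Admissible (fun x => lam * Φ₁ x) := by
  obtain ⟨hc₁, hp₁, hv₁⟩ := h₁
  obtain ⟨hc₂, hp₂, hv₂⟩ := h₂
  constructor
  · refine ⟨hc₁.add hc₂, ?_, ?_⟩
    · intro x hx
      rw [deriv2_add Φ₁ Φ₂ hc₁ hc₂ hx]
      exact add_pos (hp₁ x hx) (hp₂ x hx)
    · refine ⟨convex_Ioi 0, ?_⟩
      intro x hx y hy t s ht hs hts
      have hz : t • x + s • y ∈ Set.Ioi (0 : ℝ) := (convex_Ioi 0) hx hy ht hs hts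
      simp only [smul_eq_mul] at *
      rw [deriv2_add Φ₁ Φ₂ hc₁ hc₂ hz, deriv2_add Φ₁ Φ₂ hc₁ hc₂ hx,
        deriv2_add Φ₁ Φ₂ hc₁ hc₂ hy]
      exact key_ineq (deriv (deriv Φ₁) x) (deriv (deriv Φ₁) y) (deriv (deriv Φ₂) x)
        (deriv (deriv Φ₂) y) (deriv (deriv Φ₁) (t * x + s * y)) (deriv (deriv Φ₂) (t * x + s * y))
        t s (hp₁ x hx) (hp₁ y hy) (hp₂ x hx) (hp₂ y hy) (hp₁ _ hz) (hp₂ _ hz) ht hs hts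
        (hv₁.2 hx hy ht hs hts) (hv₂.2 hx hy ht hs hts)
  · refine ⟨contDiffOn_const.mul hc₁, ?_, ?_⟩
    · intro x hx
      rw [deriv2_smul Φ₁ lam x]
      exact mul_pos hlam (hp₁ x hx)
    · have h := hv₁.smul (c := lam⁻¹) (by positivity)
      have heq : (fun x => -1 / deriv (deriv (fun y => lam * Φ₁ y)) x) =
          (lam⁻¹ • fun x => -1 / deriv (deriv Φ₁) x) := by
        funext x
        rw [deriv2_smul Φ₁ lam x]
        simp only [Pi.smul_apply, smul_eq_mul]
        rw [div_mul_eq_div_div_swap, div_eq_mul_inv, mul_comm]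
      rw [heq]
      exact h
end

section
/- For a C⁴ function Φ with Φ'' > 0, the function −1/Φ'' is convex if and only if the map (x,y) ↦ Φ''(x)·y² is convex on (0,∞) × ℝ. -/
open Real Set

theorem neg_inv_second_deriv_convex_iff
    (Φ : ℝ → ℝ)
    (hC4 : ContDiffOn ℝ 4 Φ (Set.Ioi 0))
    (hpos : ∀ x ∈ Set.Ioi (0 : ℝ), 0 < deriv (deriv Φ) x) :
    ConvexOn ℝ (Set.Ioi 0) (fun x => -1 / deriv (deriv Φ) x) ↔
    ConvexOn ℝ ((Set.Ioi 0) ×ˢ (Set.univ : Set ℝ))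
      (fun p : ℝ × ℝ => deriv (deriv Φ) p.1 * p.2 ^ 2) := by
  set f := deriv (deriv Φ) with hfdef
  constructor
  · rintro ⟨-, h⟩
    refine ⟨(convex_Ioi 0).prod convex_univ, ?_⟩
    rintro ⟨x, y₁⟩ ⟨hx, -⟩ ⟨z, y₂⟩ ⟨hz, -⟩ a b ha hb hab
    have hf1 := hpos x hx
    have hf2 := hpos z hz
    have hm : a • x + b • z ∈ Set.Ioi (0:ℝ) := convex_Ioi 0 hx hz ha hb hab
    have hfm := hpos _ hm
    have key := h hx hz ha hb hab
    simp only [smul_eq_mul] at key hm hfm ⊢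
    simp only [Prod.smul_mk, Prod.mk_add_mk, smul_eq_mul]
    -- from key: a/f x + b/f z ≤ 1 / f (a*x+b*z)
    have e1 : a * (-1 / f x) + b * (-1 / f z) = -(a / f x + b / f z) := by ring
    rw [e1, neg_div, neg_le_neg_iff] at key
    have h1 : a / f x + b / f z ≤ 1 / f (a * x + b * z) := key
    rw [div_add_div _ _ hf1.ne' hf2.ne', div_le_div_iff₀ (mul_pos hf1 hf2) hfm] at h1
    -- h1 : (a * f z + b * f x) * f (a*x+b*z) ≤ 1 * (f x * f z)
    have hR : 0 ≤ a * (f x * y₁ ^ 2) + b * (f z * y₂ ^ 2) := by positivity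
    have hCS : f x * f z * (a * y₁ + b * y₂) ^ 2 ≤
        (a * f z + b * f x) * (a * (f x * y₁ ^ 2) + b * (f z * y₂ ^ 2)) := by
      nlinarith [mul_nonneg (mul_nonneg ha hb) (sq_nonneg (f x * y₁ - f z * y₂))]
    have h2 := mul_le_mul_of_nonneg_left hCS hfm.le
    have h3 := mul_le_mul_of_nonneg_right h1 hR
    have h4 : (f x * f z) * (f (a * x + b * z) * (a * y₁ + b * y₂) ^ 2) ≤
        (f x * f z) * (a * (f x * y₁ ^ 2) + b * (f z * y₂ ^ 2)) := by nlinarith [h2, h3]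
    exact le_of_mul_le_mul_left h4 (mul_pos hf1 hf2)
  · rintro ⟨-, h⟩
    refine ⟨convex_Ioi 0, ?_⟩
    intro x hx z hz a b ha hb hab
    have hf1 := hpos x hx
    have hf2 := hpos z hz
    have hm : a • x + b • z ∈ Set.Ioi (0:ℝ) := convex_Ioi 0 hx hz ha hb hab
    have hfm := hpos _ hm
    have key := h (x := (x, f z)) ⟨hx, Set.mem_univ _⟩ (y := (z, f x)) ⟨hz, Set.mem_univ _⟩
      ha hb hab
    simp only [Prod.smul_mk, Prod.mk_add_mk, smul_eq_mul] at key hm hfm ⊢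
    -- key : f (a*x+b*z) * (a * f z + b * f x)^2 ≤ a * (f x * f z ^2) + b * (f z * f x ^2)
    have hT : 0 < a * f z + b * f x := by
      rcases (lt_or_eq_of_le ha) with ha' | ha'
      · have : 0 ≤ b * f x := mul_nonneg hb hf1.le
        nlinarith [mul_pos ha' hf2]
      · have hb1 : b = 1 := by linarith
        rw [← ha', hb1]; simpa using hf1
    have h6 : (f (a * x + b * z) * (a * f z + b * f x)) * (a * f z + b * f x) ≤
        (f x * f z) * (a * f z + b * f x) := by nlinarith [key]
    have h5 := le_of_mul_le_mul_right h6 hT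
    have goalS : a / f x + b / f z ≤ 1 / f (a * x + b * z) := by
      rw [div_add_div _ _ hf1.ne' hf2.ne', div_le_div_iff₀ (mul_pos hf1 hf2) hfm]
      nlinarith [h5]
    have e1 : a * (-1 / f x) + b * (-1 / f z) = -(a / f x + b / f z) := by ring
    rw [e1, neg_div, neg_le_neg_iff]
    exact goalS
end

section
/- Let Θ₁: (0,∞) → ℝ be C¹ with Θ₁' ≥ 0, Θ₁ > 0, and u ↦ uΘ₁'(u) increasing. Define Φ(r) = ∫₀^r (r−u)·u·Θ₁'(u)² du, so Φ''(r) = rΘ₁'(r)². Then Θ₁'(r)·Φ'(r) − Θ₁(r)·Φ''(r) ≤ 0 for all r > 0, where Φ'(r) = ∫₀^r uΘ₁'(u)² du. -/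
/-! Since `u Θ₁'(u)` is increasing, on `[ε, r]` we have `u Θ₁'(u)² ≤ r Θ₁'(r) · Θ₁'(u)`, so by the
fundamental theorem of calculus `∫_ε^r u Θ₁'(u)² du ≤ r Θ₁'(r) (Θ₁(r) - Θ₁(ε)) ≤ r Θ₁'(r) Θ₁(r)`
because `Θ₁ > 0`. Letting `ε → 0⁺` gives `Φ'(r) ≤ r Θ₁'(r) Θ₁(r)`, and multiplying by `Θ₁'(r) ≥ 0`
yields the claim. -/

open Real Set intervalIntegral

theorem intervalIntegral_le_of_forall_Ioc_le {f : ℝ → ℝ} {a b C : ℝ} (hab : a < b)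
    (hf : IntervalIntegrable f MeasureTheory.volume a b)
    (h : ∀ ε ∈ Ioc a b, ∫ x in ε..b, f x ≤ C) : ∫ x in a..b, f x ≤ C := by
  have hcont : ContinuousOn (fun ε => ∫ x in ε..b, f x) (uIcc a b) :=
    continuousOn_primitive_interval_left (by
      rwa [uIcc_of_le hab.le, ← intervalIntegrable_iff_integrableOn_Icc_of_le hab.le])
  have hsub : Ioc a b ⊆ uIcc a b := by
    rw [uIcc_of_le hab.le]
    exact Ioc_subset_Icc_self
  have : (nhdsWithin a (Ioc a b)).NeBot := by
    rw [← mem_closure_iff_nhdsWithin_neBot, closure_Ioc hab.ne]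
    exact left_mem_Icc.mpr hab.le
  exact le_of_tendsto ((hcont a left_mem_uIcc).mono_left (nhdsWithin_mono a hsub))
    (Filter.eventually_of_mem self_mem_nhdsWithin h)

theorem integral_mul_sq_deriv_le {Θ Θ' : ℝ → ℝ} {a b : ℝ} (hab : a ≤ b)
    (hderiv : ∀ x ∈ Icc a b, HasDerivAt Θ (Θ' x) x) (hcont : ContinuousOn Θ' (Icc a b))
    (hnonneg : ∀ x ∈ Icc a b, 0 ≤ Θ' x) (hle : ∀ x ∈ Icc a b, x * Θ' x ≤ b * Θ' b) :
    ∫ x in a..b, x * Θ' x ^ 2 ≤ b * Θ' b * (Θ b - Θ a) := by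
  have hint : IntervalIntegrable Θ' MeasureTheory.volume a b :=
    (hcont.mono (uIcc_of_le hab).subset).intervalIntegrable
  calc ∫ x in a..b, x * Θ' x ^ 2
      ≤ ∫ x in a..b, b * Θ' b * Θ' x := by
        refine integral_mono_on hab ?_ (hint.const_mul _) fun x hx => ?_
        · exact ((continuousOn_id.mul (hcont.pow 2)).mono
            (uIcc_of_le hab).subset).intervalIntegrable
        · calc x * Θ' x ^ 2 = x * Θ' x * Θ' x := by ring
            _ ≤ b * Θ' b * Θ' x := mul_le_mul_of_nonneg_right (hle x hx) (hnonneg x hx)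
    _ = b * Θ' b * (Θ b - Θ a) := by
        rw [integral_const_mul, integral_eq_sub_of_hasDerivAt
          (fun x hx => hderiv x ((uIcc_of_le hab).subset hx)) hint]

theorem theta1_phi_inequality
    (Θ₁ : ℝ → ℝ)
    (hC1 : ContDiffOn ℝ 1 Θ₁ (Set.Ioi 0))
    (hderiv_nonneg : ∀ u ∈ Set.Ioi (0 : ℝ), 0 ≤ deriv Θ₁ u)
    (hpos : ∀ u ∈ Set.Ioi (0 : ℝ), 0 < Θ₁ u)
    (hmono : MonotoneOn (fun u : ℝ => u * deriv Θ₁ u) (Set.Ioi 0)) :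
    ∀ r : ℝ, 0 < r →
      deriv Θ₁ r * (∫ u in (0 : ℝ)..r, u * (deriv Θ₁ u) ^ 2) -
        Θ₁ r * (r * (deriv Θ₁ r) ^ 2) ≤ 0 := by
  intro r hr
  have hdr := hderiv_nonneg r hr
  by_cases hint : IntervalIntegrable (fun u => u * (deriv Θ₁ u) ^ 2) MeasureTheory.volume 0 r
  · have hΘ' : ContinuousOn (deriv Θ₁) (Ioi 0) :=
      hC1.continuousOn_deriv_of_isOpen isOpen_Ioi le_rfl
    have hΦ' : ∫ u in (0 : ℝ)..r, u * deriv Θ₁ u ^ 2 ≤ r * deriv Θ₁ r * Θ₁ r := by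
      refine intervalIntegral_le_of_forall_Ioc_le hr hint fun ε hε => ?_
      have hpos_on : Icc ε r ⊆ Ioi 0 := fun x hx => hε.1.trans_le hx.1
      have hbound := integral_mul_sq_deriv_le hε.2
        (fun x hx => ((hC1.differentiableOn one_ne_zero x (hpos_on hx)).differentiableAt
          (isOpen_Ioi.mem_nhds (hpos_on hx))).hasDerivAt)
        (hΘ'.mono hpos_on) (fun x hx => hderiv_nonneg x (hpos_on hx))
        (fun x hx => hmono (hpos_on hx) hr hx.2)
      nlinarith [hpos ε hε.1, mul_nonneg hr.le hdr]
    nlinarith [mul_le_mul_of_nonneg_left hΦ' hdr]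
  · rw [integral_undef hint]
    nlinarith [mul_nonneg (mul_nonneg (hpos r hr).le hr.le) (sq_nonneg (deriv Θ₁ r))]
end

section
/- Let u: [0,T] → ℝ be differentiable satisfying u'(t) + u(t)²/n + nκ ≤ 0 with κ > 0. Then u(t) ≤ n√κ · (u(0)/(n√κ) − tan(√κ t)) / (1 + (u(0)/(n√κ)) tan(√κ t)) for t such that the denominator is positive. -/
/-!
With `c = n √κ` the rescaled function `w = u / c` satisfies `w' ≤ -√κ (1 + w²)`, so
`arctan w + √κ t` is nonincreasing: `arctan (w t) ≤ arctan (w 0) - √κ t`. Since the right-hand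
side stays above `-π/2`, applying `tan` and the subtraction formula gives the bound.
-/

open Real Set

/-- No condition on `1 + tan a * tan b` is needed: where it vanishes so does `cos (a - b)`,
and both sides are `0` by Lean's division convention. -/
theorem Real.tan_sub_of_cos_ne_zero {a b : ℝ} (ha : cos a ≠ 0) (hb : cos b ≠ 0) :
    tan (a - b) = (tan a - tan b) / (1 + tan a * tan b) := by
  have hab : cos a * cos b ≠ 0 := mul_ne_zero ha hb
  have hnum : tan a - tan b = (sin a * cos b - cos a * sin b) / (cos a * cos b) := by
    rw [tan_eq_sin_div_cos, tan_eq_sin_div_cos]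
    field_simp
  have hden : 1 + tan a * tan b = (cos a * cos b + sin a * sin b) / (cos a * cos b) := by
    rw [tan_eq_sin_div_cos, tan_eq_sin_div_cos]
    field_simp
  rw [hnum, hden, div_div_div_cancel_right₀ hab, tan_eq_sin_div_cos, sin_sub, cos_sub]

theorem antitoneOn_arctan_add_mul_of_hasDerivAt {s : Set ℝ} (hs : Convex ℝ s) {w w' : ℝ → ℝ}
    {k : ℝ} (hw : ∀ t ∈ s, HasDerivAt w (w' t) t)
    (hle : ∀ t ∈ s, w' t ≤ -k * (1 + w t ^ 2)) :
    AntitoneOn (fun t => arctan (w t) + k * t) s := by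
  have hderiv : ∀ t ∈ s,
      HasDerivAt (fun t => arctan (w t) + k * t) (w' t / (1 + w t ^ 2) + k) t := by
    intro t ht
    have := ((hw t ht).arctan).add ((hasDerivAt_id' t).const_mul k)
    rwa [mul_one, one_div_mul_eq_div] at this
  refine antitoneOn_of_hasDerivWithinAt_nonpos hs
    (fun t ht => (hderiv t ht).continuousAt.continuousWithinAt)
    (fun t ht => (hderiv t (interior_subset ht)).hasDerivWithinAt) fun t ht => ?_
  have hpos : 0 < 1 + w t ^ 2 := by positivity
  have : w' t / (1 + w t ^ 2) ≤ -k := by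
    rw [div_le_iff₀ hpos]
    exact hle t (interior_subset ht)
  linarith

theorem riccati_rescale {n κ x x' : ℝ} (hn : 0 < n) (hκ : 0 < κ)
    (h : x' + x ^ 2 / n + n * κ ≤ 0) :
    x' / (n * √κ) ≤ -√κ * (1 + (x / (n * √κ)) ^ 2) := by
  have hsκ : 0 < √κ := sqrt_pos.2 hκ
  have hc : 0 < n * √κ := mul_pos hn hsκ
  have hrhs : -√κ * (1 + (x / (n * √κ)) ^ 2) = -(x ^ 2 / n + n * κ) / (n * √κ) := by
    field_simp
    rw [sq_sqrt hκ.le]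
    ring
  rw [hrhs]
  exact div_le_div_of_nonneg_right (by linarith) hc.le

theorem le_div_of_arctan_le_arctan_sub {x y b : ℝ} (hb₀ : 0 ≤ b) (hb : b < π / 2)
    (h : arctan y ≤ arctan x - b) :
    y ≤ (x - tan b) / (1 + x * tan b) := by
  have hlow : -(π / 2) < arctan x - b := (neg_pi_div_two_lt_arctan y).trans_le h
  have hupp : arctan x - b < π / 2 := by linarith [arctan_lt_pi_div_two x]
  have hcos_a : cos (arctan x) ≠ 0 := (cos_arctan_pos x).ne'
  have hcos_b : cos b ≠ 0 := (cos_pos_of_mem_Ioo ⟨by linarith [pi_pos], hb⟩).ne'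
  rw [← tan_arctan x, ← tan_sub_of_cos_ne_zero hcos_a hcos_b, ← arctan_le_arctan_iff,
    arctan_tan hlow hupp]
  exact h

theorem riccati_comparison_ricci_general
    (n κ T : ℝ) (hn : 1 ≤ n) (hκ : 0 < κ)
    (u u' : ℝ → ℝ)
    (hderiv : ∀ t ∈ Set.Icc 0 T, HasDerivAt u (u' t) t)
    (hineq : ∀ t ∈ Set.Icc 0 T, u' t + (u t) ^ 2 / n + n * κ ≤ 0) :
    ∀ t ∈ Set.Icc 0 T, Real.sqrt κ * t < π / 2 →
      0 < 1 + (u 0 / (n * Real.sqrt κ)) * Real.tan (Real.sqrt κ * t) →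
      u t ≤ n * Real.sqrt κ *
        (u 0 / (n * Real.sqrt κ) - Real.tan (Real.sqrt κ * t)) /
          (1 + (u 0 / (n * Real.sqrt κ)) * Real.tan (Real.sqrt κ * t)) := by
  intro t ht hlt _
  have hn₀ : 0 < n := zero_lt_one.trans_le hn
  have hc : 0 < n * √κ := mul_pos hn₀ (sqrt_pos.2 hκ)
  have hanti := antitoneOn_arctan_add_mul_of_hasDerivAt (convex_Icc 0 T)
    (fun s hs => (hderiv s hs).div_const (n * √κ))
    (fun s hs => riccati_rescale hn₀ hκ (hineq s hs))
  have hmono := hanti ⟨le_rfl, ht.1.trans ht.2⟩ ht ht.1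
  simp only [mul_zero, add_zero] at hmono
  have hbound := le_div_of_arctan_le_arctan_sub (mul_nonneg (sqrt_nonneg κ) ht.1) hlt
    (le_sub_iff_add_le.2 hmono)
  rw [mul_div_assoc, ← div_le_iff₀' hc]
  exact hbound

theorem riccati_comparison_ricci
    (n κ T : ℝ) (hn : 1 ≤ n) (hκ : 0 < κ) (hT : 0 ≤ T)
    (u u' : ℝ → ℝ)
    (hderiv : ∀ t ∈ Set.Icc 0 T, HasDerivAt u (u' t) t)
    (hineq : ∀ t ∈ Set.Icc 0 T, u' t + (u t) ^ 2 / n + n * κ ≤ 0) :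
    ∀ t ∈ Set.Icc 0 T, Real.sqrt κ * t < π / 2 →
      0 < 1 + (u 0 / (n * Real.sqrt κ)) * Real.tan (Real.sqrt κ * t) →
      u t ≤ n * Real.sqrt κ *
        (u 0 / (n * Real.sqrt κ) - Real.tan (Real.sqrt κ * t)) /
          (1 + (u 0 / (n * Real.sqrt κ)) * Real.tan (Real.sqrt κ * t)) :=
  riccati_comparison_ricci_general n κ T hn hκ u u' hderiv hineq
end
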